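/- On duplicative forests, the reflexive-transitive closure of the duplication relation is antisymmetric, hence a partial order. Moreover, if f rewrites in one step to f', then f' has strictly more black nodes than f. -/

import Mathlib

mutual
  /-- A duplicative tree: a node colored white (`false`) or black (`true`) with a forest of children. -/
  inductive DTree : Type
    | node : Bool → DForest → DTree
  /-- A duplicative forest: a finite sequence of duplicative trees. -/
  inductive DForest : Type
    | nil : DForest
    | cons : DTree → DForest → DForest
end

def DForest.append : DForest → DForest → DForest
  | .nil, g => g
  | .cons t f, g => .cons t (f.append g)

mutual
  /-- One duplication step inside a tree. -/
  inductive TStep : DTree → DTree → Prop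
    | dup (c : DForest) : TStep (.node false c) (.node true (c.append c))
    | congr (b : Bool) {c c' : DForest} : FStep c c' → TStep (.node b c) (.node b c')
  /-- One duplication step inside a forest. -/
  inductive FStep : DForest → DForest → Prop
    | head {t t' : DTree} (f : DForest) : TStep t t' → FStep (.cons t f) (.cons t' f)
    | tail (t : DTree) {f f' : DForest} : FStep f f' → FStep (.cons t f) (.cons t f')
end

/-- Duplication order on forests. -/
def FLe : DForest → DForest → Prop := Relation.ReflTransGen FStep

mutual
  /-- Number of black nodes of a tree. -/
  def DTree.black : DTree → ℕ
    | .node b c => (cond b 1 0) + DForest.black c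
  /-- Number of black nodes of a forest. -/
  def DForest.black : DForest → ℕ
    | .nil => 0
    | .cons t f => DTree.black t + DForest.black f
end

/-! A duplication step turns a white node black and only copies the rest, so it strictly increases
the number of black nodes. A relation strictly increasing some measure has no cycles, so its
reflexive-transitive closure is antisymmetric. -/

theorem Relation.ReflTransGen.antisymm_of_lt {α β : Type*} [Preorder β] {r : α → α → Prop}
    (μ : α → β) (hμ : ∀ a b, r a b → μ a < μ b) {a b : α}
    (hab : ReflTransGen r a b) (hba : ReflTransGen r b a) : a = b := by
  have lt_of_transGen {x y : α} (h : TransGen r x y) : μ x < μ y :=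
    transGen_eq_self (r := @LT.lt β _) ▸ TransGen.lift μ hμ _ _ h
  rcases reflTransGen_iff_eq_or_transGen.1 hab with rfl | hab
  · rfl
  rcases reflTransGen_iff_eq_or_transGen.1 hba with rfl | hba
  · rfl
  exact (lt_asymm (lt_of_transGen hab) (lt_of_transGen hba)).elim

theorem DForest.black_append (f g : DForest) : (f.append g).black = f.black + g.black := by
  match f with
  | .nil => simp [DForest.append, DForest.black]
  | .cons t f =>
    simp only [DForest.append, DForest.black, DForest.black_append f g]
    omega

mutual
theorem TStep.black_lt {t t' : DTree} : TStep t t' → t.black < t'.black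
  | .dup c => by
    simp only [DTree.black, cond_true, cond_false, DForest.black_append]
    omega
  | .congr b h => by
    simpa only [DTree.black, Nat.add_lt_add_iff_left] using h.black_lt
theorem FStep.black_lt {f f' : DForest} : FStep f f' → f.black < f'.black
  | .head g h => by
    simpa only [DForest.black, Nat.add_lt_add_iff_right] using h.black_lt
  | .tail t h => by
    simpa only [DForest.black, Nat.add_lt_add_iff_left] using h.black_lt
end

/-- The duplication order on duplicative forests is antisymmetric (hence a partial order),
and each one-step duplication strictly increases the number of black nodes. -/
theorem duplication_partial_order :
    (∀ f f' : DForest, FLe f f' → FLe f' f → f = f') ∧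
    (∀ f f' : DForest, FStep f f' → DForest.black f < DForest.black f') :=
  ⟨fun _ _ => Relation.ReflTransGen.antisymm_of_lt DForest.black fun _ _ => FStep.black_lt,
    fun _ _ => FStep.black_lt⟩
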